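/- arXiv:2408.03147 — 7 statements merged into one kernel-verified Lean document; each statement's English description precedes it below -/
import Mathlib

section
/- If probability measures Q1 and Q2 on a measurable space (Ω, F) are mutually singular, ρ1 is a map on bounded random variables that is law-invariant under Q1, and ρ2 is law-invariant under Q2 and constant-preserving (ρ2(c) = c for all constants c), then the inf-convolution ρ1□ρ2(X) = inf{ρ1(X−Y) + ρ2(Y) : Y bounded measurable} equals −∞ for every bounded random variable X. -/
open MeasureTheory Set

/-- A bounded real-valued random variable. -/
def Bounded {Ω : Type*} (X : Ω → ℝ) : Prop := ∃ C : ℝ, ∀ ω, |X ω| ≤ C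

theorem stmt0 {Ω : Type*} [MeasurableSpace Ω] (Q1 Q2 : Measure Ω)
    [IsProbabilityMeasure Q1] [IsProbabilityMeasure Q2]
    (hsing : ∃ A : Set Ω, MeasurableSet A ∧ Q1 A = 0 ∧ Q2 A = 1)
    (ρ1 ρ2 : (Ω → ℝ) → ℝ)
    (hρ1 : ∀ X Y : Ω → ℝ, Measurable X → Measurable Y → Bounded X → Bounded Y →
      Measure.map X Q1 = Measure.map Y Q1 → ρ1 X = ρ1 Y)
    (hρ2 : ∀ X Y : Ω → ℝ, Measurable X → Measurable Y → Bounded X → Bounded Y →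
      Measure.map X Q2 = Measure.map Y Q2 → ρ2 X = ρ2 Y)
    (hconst : ∀ c : ℝ, ρ2 (fun _ => c) = c)
    (X : Ω → ℝ) (hX : Measurable X) (hXb : Bounded X) :
    sInf {r : EReal | ∃ Y : Ω → ℝ, Measurable Y ∧ Bounded Y ∧
      r = ((ρ1 (X - Y) + ρ2 Y : ℝ) : EReal)} = ⊥ := by
  obtain ⟨A, hA, hQ1A, hQ2A⟩ := hsing
  have hQ2Ac : Q2 Aᶜ = 0 := by
    have := measure_compl hA (measure_ne_top Q2 A)
    rw [hQ2A, measure_univ] at this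
    simpa using this
  -- key: for every real c, ρ1 X + c is in the set
  have key : ∀ c : ℝ, ((ρ1 X + c : ℝ) : EReal) ∈
      {r : EReal | ∃ Y : Ω → ℝ, Measurable Y ∧ Bounded Y ∧
        r = ((ρ1 (X - Y) + ρ2 Y : ℝ) : EReal)} := by
    intro c
    set Y : Ω → ℝ := A.indicator (fun _ => c) with hYdef
    have hYm : Measurable Y := measurable_const.indicator hA
    have hYc : ∀ ω, |Y ω| ≤ |c| := by
      intro ω
      by_cases h : ω ∈ A <;> simp [hYdef, Set.indicator, h]
    have hYb : Bounded Y := ⟨|c|, hYc⟩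
    obtain ⟨C, hC⟩ := id hXb
    have hXYb : Bounded (X - Y) := by
      refine ⟨C + |c|, fun ω => ?_⟩
      calc |(X - Y) ω| ≤ |X ω| + |Y ω| := by
            simpa using abs_sub (X ω) (Y ω)
        _ ≤ C + |c| := add_le_add (hC ω) (hYc ω)
    -- X - Y = X a.e. Q1
    have hae1 : (X - Y) =ᵐ[Q1] X := by
      have hAc : ∀ᵐ ω ∂Q1, ω ∈ Aᶜ := by
        rw [ae_iff]
        simpa using measure_mono_null (fun ω hω => by simpa using hω) hQ1A
      filter_upwards [hAc] with ω hω
      simp [hYdef, Set.indicator_of_notMem hω]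
    have h1 : ρ1 (X - Y) = ρ1 X :=
      hρ1 _ _ (hX.sub hYm) hX hXYb hXb (Measure.map_congr hae1)
    -- Y = c a.e. Q2
    have hae2 : Y =ᵐ[Q2] (fun _ => c) := by
      have hAmem : ∀ᵐ ω ∂Q2, ω ∈ A := by
        rw [ae_iff]
        simpa using measure_mono_null (fun ω hω => by simpa using hω) hQ2Ac
      filter_upwards [hAmem] with ω hω
      simp [hYdef, Set.indicator_of_mem hω]
    have h2 : ρ2 Y = c := by
      rw [hρ2 Y (fun _ => c) hYm measurable_const hYb ⟨|c|, fun ω => le_refl _⟩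
        (Measure.map_congr hae2)]
      exact hconst c
    exact ⟨Y, hYm, hYb, by rw [h1, h2]⟩
  rw [sInf_eq_bot]
  intro b hb
  obtain ⟨r, hrb⟩ : ∃ r : ℝ, (r : EReal) < b := by
    induction b with
    | bot => exact absurd hb (lt_irrefl _)
    | coe x => exact ⟨x - 1, by exact_mod_cast sub_one_lt x⟩
    | top => exact ⟨0, EReal.coe_lt_top 0⟩
  refine ⟨((ρ1 X + (r - 1 - ρ1 X) : ℝ) : EReal), key _, ?_⟩
  have : (ρ1 X + (r - 1 - ρ1 X) : ℝ) = r - 1 := by ring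
  rw [this]
  exact lt_trans (by exact_mod_cast sub_one_lt r) hrb
end

section
/- For a right-continuous function Λ: ℝ → [0,1], the Lambda Value-at-Risk ΛVaR(X) = inf{x ∈ ℝ : P(X ≤ x) ≥ 1 − Λ(x)} satisfies, whenever it is finite, P(X ≤ ΛVaR(X)) ≥ 1 − Λ(ΛVaR(X)); that is, the defining infimum is attained as a valid threshold. -/
open MeasureTheory Set

/-- Distribution function of `X` under `Q`. -/
noncomputable def distFn {Ω : Type*} [MeasurableSpace Ω] (Q : Measure Ω) (X : Ω → ℝ) (x : ℝ) : ℝ :=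
  (Q {ω | X ω ≤ x}).toReal

/-- Lambda Value-at-Risk under `Q`. -/
noncomputable def lambdaVaR {Ω : Type*} [MeasurableSpace Ω] (Q : Measure Ω) (Λ : ℝ → ℝ)
    (X : Ω → ℝ) : ℝ :=
  sInf {x : ℝ | 1 - Λ x ≤ distFn Q X x}

/-- Right-continuity of a real function. -/
def RightCts (Λ : ℝ → ℝ) : Prop := ∀ x, ContinuousWithinAt Λ (Set.Ici x) x

theorem stmt1 {Ω : Type*} [MeasurableSpace Ω] (Q : Measure Ω) [IsProbabilityMeasure Q]
    (X : Ω → ℝ) (hX : Measurable X) (Λ : ℝ → ℝ)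
    (h0 : ∀ x, 0 ≤ Λ x) (h1 : ∀ x, Λ x ≤ 1) (hrc : RightCts Λ)
    (hne : {x : ℝ | 1 - Λ x ≤ distFn Q X x}.Nonempty)
    (hbdd : BddBelow {x : ℝ | 1 - Λ x ≤ distFn Q X x}) :
    1 - Λ (lambdaVaR Q Λ X) ≤ distFn Q X (lambdaVaR Q Λ X) := by
  set S := {x : ℝ | 1 - Λ x ≤ distFn Q X x} with hS
  set m := lambdaVaR Q Λ X with hm
  have hmap : IsProbabilityMeasure (Q.map X) := Measure.isProbabilityMeasure_map hX.aemeasurable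
  have hdist : ∀ x, distFn Q X x = ProbabilityTheory.cdf (Q.map X) x := by
    intro x
    rw [ProbabilityTheory.cdf_eq_real, measureReal_def, Measure.map_apply hX measurableSet_Iic]
    rfl
  have hFrc : ContinuousWithinAt (distFn Q X) (Ici m) m := by
    have := ((ProbabilityTheory.cdf (Q.map X)).right_continuous m).mono
      (Ici_subset_Ici.mpr le_rfl)
    refine ContinuousWithinAt.congr this (fun x _ => hdist x) (hdist m)
  have hg : ContinuousWithinAt (fun x => distFn Q X x - (1 - Λ x)) (Ici m) m :=
    hFrc.sub (continuousWithinAt_const.sub (hrc m))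
  have hSsub : S ⊆ Ici m := fun x hx => csInf_le hbdd hx
  have hgS : ContinuousWithinAt (fun x => distFn Q X x - (1 - Λ x)) S m := hg.mono hSsub
  have hmcl : m ∈ closure S := csInf_mem_closure hne hbdd
  have hnebot : (nhdsWithin m S).NeBot := mem_closure_iff_nhdsWithin_neBot.mp hmcl
  have hge : (0 : ℝ) ≤ distFn Q X m - (1 - Λ m) := by
    refine ge_of_tendsto hgS ?_
    filter_upwards [self_mem_nhdsWithin] with x hx
    have : 1 - Λ x ≤ distFn Q X x := hx
    linarith
  linarith
end

section
/- If Λ: ℝ → [0,1] is increasing, then ΛVaR(X) = ΛVaR⁺(X) for every random variable X, where ΛVaR(X) = inf{x : F_X(x) ≥ 1 − Λ(x)} and ΛVaR⁺(X) = sup{x : F_X(x) < 1 − Λ(x)}. -/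
open MeasureTheory Set

theorem stmt3 {Ω : Type*} [MeasurableSpace Ω] (Q : Measure Ω) [IsProbabilityMeasure Q]
    (X : Ω → ℝ) (hX : Measurable X) (Λ : ℝ → ℝ) (hmono : Monotone Λ)
    (h0 : ∀ x, 0 ≤ Λ x) (h1 : ∀ x, Λ x ≤ 1) :
    sInf ((fun x : ℝ => (x : EReal)) '' {x : ℝ | 1 - Λ x ≤ distFn Q X x}) =
      sSup ((fun x : ℝ => (x : EReal)) '' {x : ℝ | distFn Q X x < 1 - Λ x}) := by
  have hF : Monotone (distFn Q X) := by
    intro a b hab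
    have : Q {ω | X ω ≤ a} ≤ Q {ω | X ω ≤ b} :=
      measure_mono (fun ω (h : X ω ≤ a) => le_trans h hab)
    exact ENNReal.toReal_mono (measure_ne_top Q _) this
  apply le_antisymm
  · -- sInf ≤ sSup : by contradiction, find a real strictly between
    by_contra h
    push_neg at h
    obtain ⟨z, hz1, hz2⟩ := EReal.exists_between_coe_real h
    rcases le_or_gt (1 - Λ z) (distFn Q X z) with hz | hz
    · exact absurd (sInf_le (Set.mem_image_of_mem _ (show z ∈ {x : ℝ | 1 - Λ x ≤ distFn Q X x} from hz))) (not_le.mpr hz2)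
    · exact absurd (le_sSup (Set.mem_image_of_mem _ (show z ∈ {x : ℝ | distFn Q X x < 1 - Λ x} from hz))) (not_le.mpr hz1)
  · -- sSup ≤ sInf : every element of B is ≤ every element of A
    apply sSup_le
    rintro _ ⟨b, hb, rfl⟩
    apply le_sInf
    rintro _ ⟨a, ha, rfl⟩
    rw [EReal.coe_le_coe_iff]
    by_contra hlt
    push_neg at hlt
    have : distFn Q X a ≤ distFn Q X b := hF hlt.le
    have : distFn Q X a < 1 - Λ b := lt_of_le_of_lt this hb
    have h2 : 1 - Λ b ≤ 1 - Λ a := by linarith [hmono hlt.le]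
    simp only [Set.mem_setOf_eq] at ha
    linarith
end

section
/- Let Λ1, ..., Λn: ℝ → [0,1] be right-continuous with 0 < inf Λi ≤ sup Λi < 1, and Q1, ..., Qn probability measures on (Ω, F). Then the inf-convolution of the ΛiVaR under beliefs Qi satisfies □ᵢ ΛᵢVaR^{Qᵢ}(X) = inf{Σᵢ yᵢ : there exists a measurable partition (A1,...,An) of Ω such that Qᵢ(X > Σⱼ yⱼ, Aᵢ) ≤ Λᵢ(yᵢ) for all i}. -/
open MeasureTheory Set Function

/-- A measurable partition of `Ω` into `n` pieces. -/
def IsPartition {Ω : Type*} [MeasurableSpace Ω] {n : ℕ} (A : Fin n → Set Ω) : Prop :=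
  (∀ i, MeasurableSet (A i)) ∧ Pairwise (Disjoint on A) ∧ (⋃ i, A i) = Set.univ

section Aux
variable {Ω : Type*} [MeasurableSpace Ω]

lemma distFn_rightCts (Q : Measure Ω) [IsProbabilityMeasure Q] {X : Ω → ℝ}
    (hX : Measurable X) (x : ℝ) : ContinuousWithinAt (distFn Q X) (Set.Ici x) x := by
  have hmap : IsProbabilityMeasure (Q.map X) := Measure.isProbabilityMeasure_map hX.aemeasurable
  have heq : distFn Q X = fun t => ProbabilityTheory.cdf (Q.map X) t := by
    funext t
    rw [ProbabilityTheory.cdf_eq_real, measureReal_def, Measure.map_apply hX measurableSet_Iic]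
    rfl
  rw [heq]
  exact (ProbabilityTheory.cdf (Q.map X)).right_continuous x

lemma gt_toReal (Q : Measure Ω) [IsProbabilityMeasure Q] {X : Ω → ℝ}
    (hX : Measurable X) (x : ℝ) :
    (Q {ω | x < X ω}).toReal = 1 - distFn Q X x := by
  have hc : {ω | x < X ω} = {ω | X ω ≤ x}ᶜ := by ext ω; simp [not_le]
  have hm : MeasurableSet {ω | X ω ≤ x} := hX measurableSet_Iic
  rw [hc, measure_compl hm (measure_ne_top Q _), measure_univ,
    ENNReal.toReal_sub_of_le prob_le_one ENNReal.one_ne_top, ENNReal.toReal_one]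
  rfl

lemma lv_nonempty (Q : Measure Ω) [IsProbabilityMeasure Q] {Λ : ℝ → ℝ}
    {l : ℝ} (hl : 0 < l) (hb : ∀ x, l ≤ Λ x)
    {X : Ω → ℝ} (hXb : Bounded X) :
    {x : ℝ | 1 - Λ x ≤ distFn Q X x}.Nonempty := by
  obtain ⟨C, hC⟩ := hXb
  refine ⟨C, ?_⟩
  have h1 : {ω | X ω ≤ C} = Set.univ := by
    ext ω; simp only [Set.mem_setOf_eq, Set.mem_univ, iff_true]
    exact (le_abs_self _).trans (hC ω)
  have : distFn Q X C = 1 := by rw [distFn, h1, measure_univ, ENNReal.toReal_one]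
  rw [Set.mem_setOf_eq, this]
  have := hb C; linarith

lemma lv_bddBelow (Q : Measure Ω) [IsProbabilityMeasure Q] {Λ : ℝ → ℝ}
    {u : ℝ} (hu : u < 1) (hb : ∀ x, Λ x ≤ u)
    {X : Ω → ℝ} (hXb : Bounded X) :
    BddBelow {x : ℝ | 1 - Λ x ≤ distFn Q X x} := by
  obtain ⟨C, hC⟩ := hXb
  refine ⟨-C - 1, fun x hx => ?_⟩
  by_contra h
  push_neg at h
  have h1 : {ω | X ω ≤ x} = (∅ : Set Ω) := by
    ext ω; simp only [Set.mem_setOf_eq, Set.mem_empty_iff_false, iff_false, not_le]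
    have := (abs_le.mp (hC ω)).1; linarith
  have h2 : distFn Q X x = 0 := by rw [distFn, h1, measure_empty, ENNReal.toReal_zero]
  rw [Set.mem_setOf_eq, h2] at hx
  have := hb x; linarith

lemma lv_spec (Q : Measure Ω) [IsProbabilityMeasure Q] {Λ : ℝ → ℝ} (hrc : RightCts Λ)
    {l u : ℝ} (hl : 0 < l) (hu : u < 1) (hb : ∀ x, l ≤ Λ x ∧ Λ x ≤ u)
    {X : Ω → ℝ} (hX : Measurable X) (hXb : Bounded X) :
    1 - Λ (lambdaVaR Q Λ X) ≤ distFn Q X (lambdaVaR Q Λ X) := by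
  set S := {x : ℝ | 1 - Λ x ≤ distFn Q X x} with hS
  have hne : S.Nonempty := lv_nonempty Q hl (fun x => (hb x).1) hXb
  have hbdd : BddBelow S := lv_bddBelow Q hu (fun x => (hb x).2) hXb
  set y := sInf S with hy
  have hsub : S ⊆ Set.Ici y := fun x hx => csInf_le hbdd hx
  have hyc : y ∈ closure S := csInf_mem_closure hne hbdd
  haveI hNB : (nhdsWithin y S).NeBot := mem_closure_iff_nhdsWithin_neBot.mp hyc
  have hcont : ContinuousWithinAt (fun x => distFn Q X x + Λ x - 1) S y :=
    (((distFn_rightCts Q hX y).add (hrc y)).sub continuousWithinAt_const).mono hsub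
  have h0 : (0 : ℝ) ≤ distFn Q X y + Λ y - 1 := by
    refine ge_of_tendsto hcont ?_
    filter_upwards [eventually_mem_nhdsWithin] with x hx
    have : 1 - Λ x ≤ distFn Q X x := hx
    linarith
  have : lambdaVaR Q Λ X = y := rfl
  rw [this]; linarith
end Aux

theorem stmt4 {Ω : Type*} [MeasurableSpace Ω] {n : ℕ} (hn : 0 < n)
    (Q : Fin n → Measure Ω) [∀ i, IsProbabilityMeasure (Q i)] [∀ i, NullSingletonClass (Q i)]
    (Λ : Fin n → ℝ → ℝ) (hrc : ∀ i, RightCts (Λ i))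
    (l u : Fin n → ℝ) (hl : ∀ i, 0 < l i) (hu : ∀ i, u i < 1)
    (hbounds : ∀ i x, l i ≤ Λ i x ∧ Λ i x ≤ u i)
    (X : Ω → ℝ) (hX : Measurable X) (hXb : Bounded X) :
    sInf {r : EReal | ∃ Xa : Fin n → Ω → ℝ, (∀ i, Measurable (Xa i)) ∧ (∀ i, Bounded (Xa i)) ∧
        (∀ ω, ∑ i, Xa i ω = X ω) ∧
        r = ((∑ i, lambdaVaR (Q i) (Λ i) (Xa i) : ℝ) : EReal)} =
    sInf {r : EReal | ∃ y : Fin n → ℝ, ∃ A : Fin n → Set Ω, IsPartition A ∧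
        (∀ i, (Q i ({ω | ∑ j, y j < X ω} ∩ A i)).toReal ≤ Λ i (y i)) ∧
        r = ((∑ i, y i : ℝ) : EReal)} := by
  classical
  apply le_antisymm
  · -- LHS ≤ RHS
    apply le_sInf
    rintro r ⟨y, A, ⟨hAm, hAd, hAu⟩, hQc, rfl⟩
    set s : ℝ := ∑ j, y j with hs
    set Xa : Fin n → Ω → ℝ := fun i ω => (if ω ∈ A i then X ω - s else 0) + y i with hXa
    have hXam : ∀ i, Measurable (Xa i) := fun i =>
      (Measurable.ite (hAm i) (hX.sub measurable_const) measurable_const).add measurable_const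
    have hXab : ∀ i, Bounded (Xa i) := by
      intro i
      obtain ⟨C, hC⟩ := hXb
      refine ⟨C + |s| + |y i|, fun ω => ?_⟩
      have h1 : |(if ω ∈ A i then X ω - s else 0)| ≤ C + |s| := by
        split_ifs with h
        · rw [sub_eq_add_neg]
          refine (abs_add_le _ _).trans ?_
          rw [abs_neg]
          have := hC ω; linarith
        · have := (abs_nonneg (X ω)).trans (hC ω)
          simp only [abs_zero]
          positivity
      calc |(if ω ∈ A i then X ω - s else 0) + y i|
          ≤ |(if ω ∈ A i then X ω - s else 0)| + |y i| := abs_add_le _ _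
        _ ≤ C + |s| + |y i| := by linarith
    have hsum : ∀ ω, ∑ i, Xa i ω = X ω := by
      intro ω
      have hω : ω ∈ ⋃ i, A i := hAu ▸ Set.mem_univ ω
      obtain ⟨i0, hi0⟩ := Set.mem_iUnion.mp hω
      have h1 : ∑ i, (if ω ∈ A i then X ω - s else 0) = X ω - s := by
        rw [Finset.sum_eq_single_of_mem i0 (Finset.mem_univ i0)]
        · rw [if_pos hi0]
        · intro j _ hj
          rw [if_neg]
          exact fun hωj => (Set.disjoint_left.mp (hAd hj) hωj) hi0
      simp only [hXa]
      rw [Finset.sum_add_distrib, h1, ← hs]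
      ring
    have hle : ∀ i, lambdaVaR (Q i) (Λ i) (Xa i) ≤ y i := by
      intro i
      refine csInf_le (lv_bddBelow (Q i) (hu i) (fun x => (hbounds i x).2) (hXab i)) ?_
      have hset : {ω | y i < Xa i ω} = {ω | s < X ω} ∩ A i := by
        ext ω
        simp only [hXa, Set.mem_setOf_eq, Set.mem_inter_iff]
        constructor
        · intro h
          by_cases hA : ω ∈ A i
          · rw [if_pos hA] at h
            exact ⟨by linarith, hA⟩
          · rw [if_neg hA] at h; linarith
        · rintro ⟨h1, h2⟩
          rw [if_pos h2]; linarith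
      have h2 : (Q i {ω | y i < Xa i ω}).toReal ≤ Λ i (y i) := by
        rw [hset]; exact hQc i
      rw [gt_toReal (Q i) (hXam i) (y i)] at h2
      show 1 - Λ i (y i) ≤ distFn (Q i) (Xa i) (y i)
      linarith
    refine le_trans (sInf_le ⟨Xa, hXam, hXab, hsum, rfl⟩) ?_
    exact_mod_cast EReal.coe_le_coe_iff.mpr (Finset.sum_le_sum fun i _ => hle i)
  · -- RHS ≤ LHS
    apply le_sInf
    rintro r ⟨Xa, hXam, hXab, hsum, rfl⟩
    set y : Fin n → ℝ := fun i => lambdaVaR (Q i) (Λ i) (Xa i) with hy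
    set s : ℝ := ∑ j, y j with hs
    have hkey : ∀ i, (Q i {ω | y i < Xa i ω}).toReal ≤ Λ i (y i) := by
      intro i
      rw [gt_toReal (Q i) (hXam i) (y i)]
      have := lv_spec (Q i) (hrc i) (hl i) (hu i) (hbounds i) (hXam i) (hXab i)
      simp only [hy]; linarith
    set c0 : Fin n := ⟨0, hn⟩ with hc0
    set A : Fin n → Set Ω := fun i =>
      {ω | (y i < Xa i ω ∧ ∀ j, j < i → Xa j ω ≤ y j) ∨ (i = c0 ∧ ∀ j, Xa j ω ≤ y j)} with hA
    have hAm : ∀ i, MeasurableSet (A i) := by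
      intro i
      have heq : A i = ({ω | y i < Xa i ω} ∩ ⋂ j, ⋂ (_ : j < i), {ω | Xa j ω ≤ y j}) ∪
          (if i = c0 then ⋂ j, {ω | Xa j ω ≤ y j} else ∅) := by
        ext ω
        by_cases hi : i = c0 <;>
          simp [hA, hi, Set.mem_iInter]
      rw [heq]
      refine MeasurableSet.union ?_ ?_
      · exact (measurableSet_lt measurable_const (hXam i)).inter
          (MeasurableSet.iInter fun j => MeasurableSet.iInter fun _ =>
            measurableSet_le (hXam j) measurable_const)
      · split_ifs
        · exact MeasurableSet.iInter fun j => measurableSet_le (hXam j) measurable_const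
        · exact MeasurableSet.empty
    have hAd : Pairwise (Disjoint on A) := by
      intro i j hij
      simp only [onFun]
      rw [Set.disjoint_left]
      intro ω hωi hωj
      rcases hωi with ⟨hi1, hi2⟩ | ⟨hi0, hiR⟩ <;> rcases hωj with ⟨hj1, hj2⟩ | ⟨hj0, hjR⟩
      · rcases lt_or_gt_of_ne hij with h | h
        · exact absurd hi1 (not_lt.mpr (hj2 i h))
        · exact absurd hj1 (not_lt.mpr (hi2 j h))
      · exact absurd hi1 (not_lt.mpr (hjR i))
      · exact absurd hj1 (not_lt.mpr (hiR j))
      · exact hij (hi0.trans hj0.symm)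
    have hAu : (⋃ i, A i) = Set.univ := by
      ext ω
      simp only [Set.mem_iUnion, Set.mem_univ, iff_true]
      by_cases hR : ∀ j, Xa j ω ≤ y j
      · exact ⟨c0, Or.inr ⟨rfl, hR⟩⟩
      · push_neg at hR
        obtain ⟨j, hj⟩ := hR
        obtain ⟨i0, hi0, hmin⟩ := Set.exists_min_image {j | y j < Xa j ω} id
          (Set.toFinite _) ⟨j, hj⟩
        refine ⟨i0, Or.inl ⟨hi0, fun k hk => ?_⟩⟩
        by_contra hc
        exact absurd (hmin k (not_le.mp hc)) (not_le.mpr hk)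
    have hQc : ∀ i, (Q i ({ω | s < X ω} ∩ A i)).toReal ≤ Λ i (y i) := by
      intro i
      have hsub : {ω | s < X ω} ∩ A i ⊆ {ω | y i < Xa i ω} := by
        rintro ω ⟨hsω, hAω⟩
        rcases hAω with ⟨h1, _⟩ | ⟨_, hR⟩
        · exact h1
        · exfalso
          have : X ω ≤ s := by
            rw [← hsum ω, hs]
            exact Finset.sum_le_sum fun j _ => hR j
          exact absurd hsω (not_lt.mpr this)
      refine le_trans ?_ (hkey i)
      exact ENNReal.toReal_mono (measure_ne_top _ _) (measure_mono hsub)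
    exact sInf_le ⟨y, A, ⟨hAm, hAd, hAu⟩, hQc, rfl⟩
end

section
/- Let Λ1, ..., Λn: ℝ → [0,1] be right-continuous with 0 < inf Λᵢ ≤ sup Λᵢ = λᵢ⁺ < 1, and Q1,...,Qn probability measures. If for every measurable partition (A1,...,An) of Ω there exists an index i with Qᵢ(Aᵢ) > λᵢ⁺, then the quantity Γ(X) = inf{Σᵢ yᵢ : ∃ partition (A1,...,An), Qᵢ(X > Σⱼ yⱼ, Aᵢ) ≤ Λᵢ(yᵢ) ∀i} is bounded below by min over i of the Qᵢ-essential infimum of X; in particular Γ(X) > −∞ for bounded X. -/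
open MeasureTheory Set Function

/-- The set whose infimum (in `EReal`) is `Γ(X)`. -/
def GammaSet {Ω : Type*} [MeasurableSpace Ω] {n : ℕ} (Q : Fin n → Measure Ω)
    (Λ : Fin n → ℝ → ℝ) (X : Ω → ℝ) : Set EReal :=
  {r : EReal | ∃ y : Fin n → ℝ, ∃ A : Fin n → Set Ω, IsPartition A ∧
    (∀ i, (Q i ({ω | ∑ j, y j < X ω} ∩ A i)).toReal ≤ Λ i (y i)) ∧
    r = ((∑ i, y i : ℝ) : EReal)}

theorem stmt6 {Ω : Type*} [MeasurableSpace Ω] {n : ℕ} (hn : 0 < n)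
    (Q : Fin n → Measure Ω) [∀ i, IsProbabilityMeasure (Q i)]
    (Λ : Fin n → ℝ → ℝ) (hrc : ∀ i, RightCts (Λ i))
    (h01 : ∀ i x, 0 ≤ Λ i x ∧ Λ i x ≤ 1)
    (hpos : ∀ i, 0 < ⨅ x, Λ i x) (hsup : ∀ i, (⨆ x, Λ i x) < 1)
    (hcond : ∀ A : Fin n → Set Ω, IsPartition A → ∃ i, (⨆ x, Λ i x) < (Q i (A i)).toReal)
    (X : Ω → ℝ) (hX : Measurable X) (hXb : Bounded X) :
    ((⨅ i, essInf X (Q i) : ℝ) : EReal) ≤ sInf (GammaSet Q Λ X) ∧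
      sInf (GammaSet Q Λ X) ≠ ⊥ := by
  have : Nonempty (Fin n) := ⟨⟨0, hn⟩⟩
  obtain ⟨C, hC⟩ := hXb
  have hmain : ((⨅ i, essInf X (Q i) : ℝ) : EReal) ≤ sInf (GammaSet Q Λ X) := by
    apply le_sInf
    rintro r ⟨y, A, hA, hQ, rfl⟩
    set s := ∑ j, y j with hs
    obtain ⟨i, hi⟩ := hcond A hA
    have hbdd : BddAbove (range (Λ i)) := ⟨1, by rintro _ ⟨x, rfl⟩; exact (h01 i x).2⟩
    have h3 : (Q i ({ω | s < X ω} ∩ A i)).toReal < (Q i (A i)).toReal :=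
      lt_of_le_of_lt ((hQ i).trans (le_ciSup hbdd (y i))) hi
    -- Q i {X ≤ s} ≠ 0
    have hne : Q i {ω | X ω ≤ s} ≠ 0 := by
      intro h0
      have hsub : A i ⊆ ({ω | s < X ω} ∩ A i) ∪ {ω | X ω ≤ s} := by
        intro ω hω
        rcases le_or_gt (X ω) s with h | h
        · exact Or.inr h
        · exact Or.inl ⟨h, hω⟩
      have := (measure_mono hsub).trans ((measure_union_le _ _).trans_eq (by rw [h0, add_zero]))
      exact absurd (ENNReal.toReal_mono (measure_ne_top _ _) this) (not_le.mpr h3)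
    -- essInf X (Q i) ≤ s
    have hess : essInf X (Q i) ≤ s := by
      by_contra h
      push_neg at h
      have hb : Filter.IsBoundedUnder (· ≥ ·) (ae (Q i)) X :=
        ⟨-C, Filter.eventually_map.mpr (Filter.Eventually.of_forall
          fun ω => (abs_le.mp (hC ω)).1)⟩
      have h2 := MeasureTheory.ae_iff.mp (ae_lt_of_lt_essInf h hb)
      simp only [not_lt] at h2
      exact hne h2
    have hbb : BddBelow (range (fun j => essInf X (Q j))) := by
      refine ⟨-C, ?_⟩
      rintro _ ⟨j, rfl⟩
      have hcb : Filter.IsCoboundedUnder (· ≥ ·) (ae (Q j)) X :=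
        Filter.IsBoundedUnder.isCoboundedUnder_ge
          ⟨C, Filter.eventually_map.mpr (Filter.Eventually.of_forall
            fun ω => (abs_le.mp (hC ω)).2)⟩
      exact Filter.le_liminf_of_le hcb
        (Filter.Eventually.of_forall fun ω => (abs_le.mp (hC ω)).1)
    have hfin : (⨅ j, essInf X (Q j)) ≤ s := (ciInf_le hbb i).trans hess
    exact EReal.coe_le_coe_iff.mpr hfin
  refine ⟨hmain, ?_⟩
  intro hbot
  rw [hbot] at hmain
  exact absurd (le_bot_iff.mp hmain) (EReal.coe_ne_bot _)
end

section
/- Let Qᵢ(·) = P(·|Bᵢ) for measurable sets Bᵢ with P(Bᵢ) > 0, i = 1,...,n, and suppose P(∩ᵢBᵢ) = 0. Then for right-continuous Λᵢ: ℝ → [0,1] with 0 < inf Λᵢ ≤ sup Λᵢ < 1, the inf-convolution □ᵢ ΛᵢVaR^{Qᵢ}(X) = −∞ for every bounded random variable X. -/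
open MeasureTheory Set Function ProbabilityTheory

lemma lambdaVaR_le_aux {Ω : Type*} [MeasurableSpace Ω] (Q : Measure Ω) [IsProbabilityMeasure Q]
    (Λ : ℝ → ℝ) (l u : ℝ) (hl : 0 < l) (hu : u < 1) (hb : ∀ x, l ≤ Λ x ∧ Λ x ≤ u)
    (Y : Ω → ℝ) (C : ℝ) (hC : ∀ ω, |Y ω| ≤ C) (m : ℝ) (hm : Q {ω | Y ω ≤ m} = 1) :
    lambdaVaR Q Λ Y ≤ m := by
  apply csInf_le
  · refine ⟨-C - 1, fun x hx => ?_⟩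
    by_contra h
    push_neg at h
    have hempty : {ω | Y ω ≤ x} = (∅ : Set Ω) := by
      ext ω
      simp only [mem_setOf_eq, mem_empty_iff_false, iff_false, not_le]
      have := (abs_le.mp (hC ω)).1
      linarith
    have h0 : distFn Q Y x = 0 := by simp [distFn, hempty]
    have hx' : (1:ℝ) - Λ x ≤ 0 := by simpa [h0] using hx
    have := (hb x).2; linarith
  · show 1 - Λ m ≤ distFn Q Y m
    have h1 : distFn Q Y m = 1 := by simp [distFn, hm]
    have := (hb m).1
    rw [h1]; linarith

theorem stmt11 {Ω : Type*} [MeasurableSpace Ω] {n : ℕ} (hn : 0 < n)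
    (P : Measure Ω) [IsProbabilityMeasure P] [NullSingletonClass P]
    (B : Fin n → Set Ω) (hB : ∀ i, MeasurableSet (B i)) (hBpos : ∀ i, P (B i) ≠ 0)
    (hint : P (⋂ i, B i) = 0)
    (Λ : Fin n → ℝ → ℝ) (hrc : ∀ i, RightCts (Λ i))
    (l u : Fin n → ℝ) (hl : ∀ i, 0 < l i) (hu : ∀ i, u i < 1)
    (hbounds : ∀ i x, l i ≤ Λ i x ∧ Λ i x ≤ u i)
    (X : Ω → ℝ) (hX : Measurable X) (hXb : Bounded X) :
    sInf {r : EReal | ∃ Xa : Fin n → Ω → ℝ, (∀ i, Measurable (Xa i)) ∧ (∀ i, Bounded (Xa i)) ∧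
        (∀ ω, ∑ i, Xa i ω = X ω) ∧
        r = ((∑ i, lambdaVaR (ProbabilityTheory.cond P (B i)) (Λ i) (Xa i) : ℝ) : EReal)} = ⊥ := by
  classical
  set S := {r : EReal | ∃ Xa : Fin n → Ω → ℝ, (∀ i, Measurable (Xa i)) ∧ (∀ i, Bounded (Xa i)) ∧
        (∀ ω, ∑ i, Xa i ω = X ω) ∧
        r = ((∑ i, lambdaVaR (ProbabilityTheory.cond P (B i)) (Λ i) (Xa i) : ℝ) : EReal)} with hS
  obtain ⟨C0, hC0⟩ := hXb
  -- Main claim: for every real r there is an element of S below r.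
  have main : ∀ r : ℝ, ∃ a ∈ S, a ≤ (r : EReal) := by
    intro r
    set M : ℝ := |r| + 1 with hM
    have hMpos : 0 < M := by positivity
    set N : Set Ω := ⋂ i, B i with hN
    set Cs : Fin n → Set Ω := fun i => (B i)ᶜ ∩ ⋂ j, ⋂ (_ : j < i), B j with hCs
    set U : Set Ω := ⋃ i, Cs i with hU
    have hCsB : ∀ i, Cs i ⊆ (B i)ᶜ := fun i => inter_subset_left
    have huniq : ∀ (ω : Ω) (i j : Fin n), ω ∈ Cs i → ω ∈ Cs j → i = j := by
      intro ω i j hi hj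
      rcases lt_trichotomy i j with h | h | h
      · exfalso
        have : ω ∈ B i := by
          have := hj.2
          simp only [mem_iInter] at this
          exact this i h
        exact hi.1 this
      · exact h
      · exfalso
        have : ω ∈ B j := by
          have := hi.2
          simp only [mem_iInter] at this
          exact this j h
        exact hj.1 this
    have hcover : ∀ ω, ω ∉ N → ω ∈ U := by
      intro ω hω
      rw [hN, mem_iInter] at hω
      push_neg at hω
      set s : Finset (Fin n) := Finset.univ.filter (fun i => ω ∉ B i) with hs
      have hne : s.Nonempty := by
        obtain ⟨i, hi⟩ := hω
        exact ⟨i, by simp [hs, hi]⟩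
      set i₀ := s.min' hne with hi₀
      have hi₀mem : i₀ ∈ s := s.min'_mem hne
      have hi₀B : ω ∉ B i₀ := by
        have := hi₀mem
        simp only [hs, Finset.mem_filter] at this
        exact this.2
      refine mem_iUnion.mpr ⟨i₀, ⟨hi₀B, ?_⟩⟩
      simp only [mem_iInter]
      intro j hj
      by_contra hjB
      have hjs : j ∈ s := by simp [hs, hjB]
      exact absurd (s.min'_le j hjs) (not_le.mpr hj)
    have hCsMeas : ∀ i, MeasurableSet (Cs i) :=
      fun i => (hB i).compl.inter (MeasurableSet.iInter fun j =>
        MeasurableSet.iInter fun _ => hB j)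
    have hUMeas : MeasurableSet U := MeasurableSet.iUnion hCsMeas
    -- the allocation
    set Xa : Fin n → Ω → ℝ := fun i =>
      U.piecewise ((Cs i).piecewise (fun ω => X ω + ((n:ℝ) - 1) * M) (fun _ => -M))
        (fun ω => X ω / n) with hXa
    have hXaMeas : ∀ i, Measurable (Xa i) := by
      intro i
      exact Measurable.piecewise hUMeas
        (Measurable.piecewise (hCsMeas i) (hX.add_const _) measurable_const)
        (hX.div_const _)
    have hn1 : (1:ℝ) ≤ (n:ℝ) := by exact_mod_cast hn
    have hXaBdd : ∀ i, Bounded (Xa i) := by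
      intro i
      refine ⟨|C0| + (n:ℝ) * M + M, fun ω => ?_⟩
      have hb1 : |X ω| ≤ |C0| := (hC0 ω).trans (le_abs_self C0)
      simp only [hXa, Set.piecewise]
      split_ifs with h1 h2
      · have : |X ω + ((n:ℝ) - 1) * M| ≤ |X ω| + |((n:ℝ) - 1) * M| := abs_add_le _ _
        have h3 : |((n:ℝ) - 1) * M| = ((n:ℝ) - 1) * M := by
          rw [abs_of_nonneg]; nlinarith
        nlinarith [abs_nonneg (X ω)]
      · rw [abs_neg, abs_of_pos hMpos]; nlinarith [abs_nonneg C0]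
      · rw [abs_div, abs_of_nonneg (by positivity : (0:ℝ) ≤ (n:ℝ))]
        have : |X ω| / (n:ℝ) ≤ |X ω| := by
          apply div_le_self (abs_nonneg _) hn1
        nlinarith [abs_nonneg (X ω)]
    have hXaSum : ∀ ω, ∑ i, Xa i ω = X ω := by
      intro ω
      by_cases hω : ω ∈ U
      · obtain ⟨i₀, hi₀⟩ := mem_iUnion.mp hω
        have key : ∀ i, Xa i ω = if i = i₀ then X ω + ((n:ℝ) - 1) * M else -M := by
          intro i
          simp only [hXa, Set.piecewise, if_pos hω]
          by_cases h : i = i₀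
          · subst h
            rw [if_pos hi₀, if_pos rfl]
          · rw [if_neg h, if_neg (fun hc => h (huniq ω i i₀ hc hi₀))]
        rw [Finset.sum_congr rfl (fun i _ => key i)]
        have expand : ∀ i : Fin n, (if i = i₀ then X ω + ((n:ℝ) - 1) * M else -M)
            = -M + (if i = i₀ then X ω + ((n:ℝ) - 1) * M + M else 0) := by
          intro i; split_ifs <;> ring
        rw [Finset.sum_congr rfl (fun i _ => expand i), Finset.sum_add_distrib,
          Finset.sum_const, Finset.sum_ite_eq' Finset.univ i₀, if_pos (Finset.mem_univ i₀),
          Finset.card_univ, Fintype.card_fin, nsmul_eq_mul]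
        ring
      · have key : ∀ i : Fin n, Xa i ω = X ω / n := by
          intro i
          simp only [hXa, Set.piecewise, if_neg hω]
        rw [Finset.sum_congr rfl (fun i _ => key i), Finset.sum_const,
          Finset.card_univ, Fintype.card_fin, nsmul_eq_mul]
        field_simp
    -- the ΛVaR bound
    have hQprob : ∀ i, IsProbabilityMeasure (P[|B i]) :=
      fun i => cond_isProbabilityMeasure (hBpos i)
    have hvar : ∀ i, lambdaVaR (P[|B i]) (Λ i) (Xa i) ≤ -M := by
      intro i
      haveI := hQprob i
      obtain ⟨Ci, hCi⟩ := hXaBdd i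
      refine lambdaVaR_le_aux _ (Λ i) (l i) (u i) (hl i) (hu i) (fun x => hbounds i x)
        (Xa i) Ci hCi (-M) ?_
      have hsub : B i \ N ⊆ {ω | Xa i ω ≤ -M} := by
        intro ω hω
        have hωU : ω ∈ U := hcover ω hω.2
        have hωCs : ω ∉ Cs i := fun hc => (hCsB i hc) hω.1
        simp only [mem_setOf_eq, hXa, Set.piecewise, if_pos hωU, if_neg hωCs, le_refl]
      have hQN : P[|B i] N = 0 := by
        rw [cond_apply (hB i)]
        have : P (B i ∩ N) = 0 := measure_mono_null inter_subset_right hint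
        simp [this]
      have hQB : P[|B i] (B i) = 1 := by
        rw [cond_apply (hB i)]
        rw [inter_self]
        exact ENNReal.inv_mul_cancel (hBpos i) (measure_ne_top P _)
      have hdiff : P[|B i] (B i \ N) = 1 := by
        rw [measure_diff_null hQN, hQB]
      have hle : (1 : ENNReal) ≤ P[|B i] {ω | Xa i ω ≤ -M} := by
        rw [← hdiff]; exact measure_mono hsub
      exact le_antisymm prob_le_one hle
    -- assemble
    refine ⟨((∑ i, lambdaVaR (P[|B i]) (Λ i) (Xa i) : ℝ) : EReal),
      ⟨Xa, hXaMeas, hXaBdd, hXaSum, rfl⟩, ?_⟩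
    rw [EReal.coe_le_coe_iff]
    have h1 : (∑ i, lambdaVaR (P[|B i]) (Λ i) (Xa i)) ≤ ∑ _i : Fin n, (-M) :=
      Finset.sum_le_sum (fun i _ => hvar i)
    have h2 : (∑ _i : Fin n, (-M)) = (n:ℝ) * (-M) := by
      rw [Finset.sum_const, Finset.card_univ, Fintype.card_fin, nsmul_eq_mul]
    have h3 : (n:ℝ) * (-M) ≤ r := by
      have : -M ≤ r := by
        have := abs_nonneg r
        have := neg_abs_le r
        simp only [hM]; linarith
      nlinarith
    linarith [h1, h2 ▸ h1]
  -- conclude sInf = ⊥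
  rw [sInf_eq_bot]
  intro b hb
  induction b using EReal.rec with
  | bot => exact absurd hb (lt_irrefl _)
  | coe x =>
    obtain ⟨a, ha, hle⟩ := main (x - 1)
    exact ⟨a, ha, lt_of_le_of_lt hle (by exact_mod_cast sub_one_lt x)⟩
  | top =>
    obtain ⟨a, ha, hle⟩ := main 0
    exact ⟨a, ha, lt_of_le_of_lt hle (by simp)⟩
end

section
/- Let ρ be a monotone functional on bounded random variables law-invariant under a probability measure Q2, and Λ: ℝ → [0,1] right-continuous with 0 < inf Λ ≤ sup Λ < 1 under an atomless measure Q1. Define Λ_x(z) = inf{Λ(t) : x ≤ t ≤ z} for z ≥ x, and for y ≥ x the distribution function Λ_{x,y}(z) = 0 if z < x, = 1 − Λ_x(z) if x ≤ z < y, = 1 if z ≥ y, with left-quantile inverse Λ_{x,y}^{−1}. Then for any x ∈ ℝ, y ≥ x, and any random variable U uniformly distributed on [0,1] under Q1, ΛVaR^{+,Q1}(Λ_{x,y}^{−1}(U)) = x, where ΛVaR^{+,Q1}(Z) = sup{z : Q1(Z ≤ z) < 1 − Λ(z)}. -/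
open MeasureTheory Set Function

/-- `Λ_x(z) = inf {Λ t : x ≤ t ≤ z}`. -/
noncomputable def lamLow (Λ : ℝ → ℝ) (x z : ℝ) : ℝ := sInf (Λ '' Set.Icc x z)

/-- The distribution function `Λ_{x,y}`. -/
noncomputable def lamXY (Λ : ℝ → ℝ) (x y z : ℝ) : ℝ :=
  if z < x then 0 else if z < y then 1 - lamLow Λ x z else 1

/-- The generalized (left-quantile) inverse of `Λ_{x,y}`. -/
noncomputable def lamXYinv (Λ : ℝ → ℝ) (x y p : ℝ) : ℝ := sInf {z : ℝ | p ≤ lamXY Λ x y z}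

/-- `ΛVaR⁺` under `Q`. -/
noncomputable def lambdaVaRplus {Ω : Type*} [MeasurableSpace Ω] (Q : Measure Ω) (Λ : ℝ → ℝ)
    (Z : Ω → ℝ) : ℝ :=
  sSup {z : ℝ | distFn Q Z z < 1 - Λ z}

section Aux

variable {Λ : ℝ → ℝ} {l u : ℝ}

lemma lamLow_le (hb : ∀ t, l ≤ Λ t ∧ Λ t ≤ u) {x z t : ℝ} (ht : t ∈ Set.Icc x z) :
    lamLow Λ x z ≤ Λ t := by
  refine csInf_le ⟨l, ?_⟩ (Set.mem_image_of_mem _ ht)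
  rintro a ⟨s, -, rfl⟩; exact (hb s).1

lemma le_lamLow {c x z : ℝ} (hxz : x ≤ z) (h : ∀ t ∈ Set.Icc x z, c ≤ Λ t) :
    c ≤ lamLow Λ x z :=
  le_csInf (Set.Nonempty.image _ ⟨x, le_refl x, hxz⟩)
    (by rintro a ⟨s, hs, rfl⟩; exact h s hs)

set_option linter.unusedSectionVars false
variable (hl : 0 < l) (hu : u < 1) (hb : ∀ t, l ≤ Λ t ∧ Λ t ≤ u)
include hl hu hb

lemma lamLow_mem {x z : ℝ} (hxz : x ≤ z) : l ≤ lamLow Λ x z ∧ lamLow Λ x z ≤ u :=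
  ⟨le_lamLow hxz fun t _ => (hb t).1,
   (lamLow_le hb (⟨le_refl x, hxz⟩ : x ∈ Set.Icc x z)).trans (hb x).2⟩

lemma lamXY_nonneg (x y z : ℝ) : 0 ≤ lamXY Λ x y z := by
  unfold lamXY
  split_ifs with h1 h2
  · exact le_refl 0
  · have := (lamLow_mem hl hu hb (not_lt.1 h1)).2
    linarith
  · exact zero_le_one

lemma lamXY_le_one (x y z : ℝ) : lamXY Λ x y z ≤ 1 := by
  unfold lamXY
  split_ifs with h1 h2
  · exact zero_le_one
  · have := (lamLow_mem hl hu hb (not_lt.1 h1)).1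
    linarith
  · exact le_refl 1

lemma lamXY_mono (x y : ℝ) (hxy : x ≤ y) : Monotone (lamXY Λ x y) := by
  intro z1 z2 h12
  rcases lt_or_ge z2 x with h2x | h2x
  · have h1x : z1 < x := h12.trans_lt h2x
    simp [lamXY, h1x, h2x]
  rcases lt_or_ge z1 x with h1x | h1x
  · rw [lamXY, if_pos h1x]
    exact lamXY_nonneg hl hu hb x y z2
  rcases lt_or_ge z2 y with h2y | h2y
  · have h1y : z1 < y := lt_of_le_of_lt h12 h2y
    rw [lamXY, if_neg (not_lt.2 h1x), if_pos h1y, lamXY, if_neg (not_lt.2 h2x), if_pos h2y]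
    have h1 : lamLow Λ x z2 ≤ lamLow Λ x z1 :=
      le_lamLow h1x fun t ht => lamLow_le hb ⟨ht.1, ht.2.trans h12⟩
    linarith
  · have h1 : lamXY Λ x y z2 = 1 := by rw [lamXY, if_neg (not_lt.2 h2x), if_neg (not_lt.2 h2y)]
    rw [h1]; exact lamXY_le_one hl hu hb x y z1

/-- right-continuity in the form we need -/
lemma lamXY_rc (hrc : ∀ t, ContinuousWithinAt Λ (Set.Ici t) t) (x y : ℝ) (hxy : x ≤ y)
    (z : ℝ) {ε : ℝ} (hε : 0 < ε) :
    ∃ w, z < w ∧ lamXY Λ x y w ≤ lamXY Λ x y z + ε := by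
  rcases lt_or_ge z x with hzx | hxz
  · refine ⟨(z + x) / 2, by linarith, ?_⟩
    have h1 : (z + x) / 2 < x := by linarith
    simp only [lamXY, if_pos hzx, if_pos h1]; linarith
  rcases le_or_gt y z with hyz | hzy
  · refine ⟨z + 1, by linarith, ?_⟩
    have h1 : ¬ z + 1 < x := by linarith
    have h2 : ¬ z + 1 < y := by linarith
    have h3 : ¬ z < x := not_lt.2 hxz
    have h4 : ¬ z < y := not_lt.2 hyz
    simp only [lamXY, if_neg h1, if_neg h2, if_neg h3, if_neg h4]; linarith
  · obtain ⟨δ, hδ, hδ'⟩ := Metric.continuousWithinAt_iff.1 (hrc z) ε hε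
    set w := min (z + δ / 2) ((z + y) / 2) with hw
    have hzw : z < w := by
      apply lt_min <;> linarith
    have hwy : w < y := (min_le_right _ _).trans_lt (by linarith)
    have hwδ : w < z + δ := (min_le_left _ _).trans_lt (by linarith)
    refine ⟨w, hzw, ?_⟩
    have h1 : ¬ w < x := not_lt.2 (hxz.trans hzw.le)
    have h3 : ¬ z < x := not_lt.2 hxz
    simp only [lamXY, if_neg h1, if_pos hwy, if_neg h3, if_pos hzy]
    have key : lamLow Λ x z - ε ≤ lamLow Λ x w := by
      refine le_lamLow (hxz.trans hzw.le) fun t ht => ?_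
      rcases le_or_gt t z with htz | hzt
      · have := lamLow_le hb (⟨ht.1, htz⟩ : t ∈ Set.Icc x z); linarith
      · have hdist : dist t z < δ := by
          rw [Real.dist_eq, abs_of_nonneg (by linarith)]
          have := ht.2; linarith
        have h5 := hδ' (Set.mem_Ici.2 hzt.le) hdist
        rw [Real.dist_eq, abs_lt] at h5
        have := lamLow_le hb (⟨hxz, le_refl z⟩ : z ∈ Set.Icc x z)
        linarith
    linarith

/-- Galois: `lamXYinv p ≤ z ↔ p ≤ lamXY z` for `0 < p ≤ 1`. -/
lemma lamXYinv_le_iff (hrc : ∀ t, ContinuousWithinAt Λ (Set.Ici t) t) (x y : ℝ) (hxy : x ≤ y)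
    {p z : ℝ} (hp : 0 < p) (hp1 : p ≤ 1) :
    lamXYinv Λ x y p ≤ z ↔ p ≤ lamXY Λ x y z := by
  have hbdd : BddBelow {w : ℝ | p ≤ lamXY Λ x y w} := by
    refine ⟨x, fun w hw => ?_⟩
    by_contra hc
    push_neg at hc
    simp only [Set.mem_setOf_eq, lamXY, if_pos hc] at hw
    linarith
  have hne : {w : ℝ | p ≤ lamXY Λ x y w}.Nonempty := by
    refine ⟨y, ?_⟩
    have h1 : ¬ y < x := not_lt.2 hxy
    have h2 : ¬ y < y := lt_irrefl y
    simp only [Set.mem_setOf_eq, lamXY, if_neg h1, if_neg h2]; exact hp1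
  constructor
  · intro h
    refine le_of_forall_pos_le_add fun ε hε => ?_
    obtain ⟨w, hzw, hwε⟩ := lamXY_rc hl hu hb hrc x y hxy z hε
    obtain ⟨w', hw', hww'⟩ := (csInf_lt_iff hbdd hne).1 (h.trans_lt hzw)
    calc p ≤ lamXY Λ x y w' := hw'
    _ ≤ lamXY Λ x y w := lamXY_mono hl hu hb x y hxy hww'.le
    _ ≤ lamXY Λ x y z + ε := hwε
  · intro h
    exact csInf_le hbdd h

end Aux

theorem stmt16 {Ω : Type*} [MeasurableSpace Ω] (Q1 : Measure Ω)
    [IsProbabilityMeasure Q1] [NullSingletonClass Q1]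
    (Λ : ℝ → ℝ) (hrc : ∀ x, ContinuousWithinAt Λ (Set.Ici x) x)
    (l u : ℝ) (hl : 0 < l) (hu : u < 1) (hb : ∀ x, l ≤ Λ x ∧ Λ x ≤ u)
    (x y : ℝ) (hxy : x ≤ y)
    (U : Ω → ℝ) (hU : Measurable U)
    (hunif : Measure.map U Q1 = MeasureTheory.volume.restrict (Set.Icc (0 : ℝ) 1)) :
    lambdaVaRplus Q1 Λ (fun ω => lamXYinv Λ x y (U ω)) = x := by
  -- Step 1: distribution function of the quantile transform is lamXY
  have hdist : ∀ z, distFn Q1 (fun ω => lamXYinv Λ x y (U ω)) z = lamXY Λ x y z := by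
    intro z
    set c := lamXY Λ x y z with hc
    have hc0 : 0 ≤ c := lamXY_nonneg hl hu hb x y z
    have hc1 : c ≤ 1 := lamXY_le_one hl hu hb x y z
    have key : ∀ p : ℝ, p ∈ Set.Ioc (0:ℝ) 1 → (lamXYinv Λ x y p ≤ z ↔ p ≤ c) := by
      intro p hp
      exact lamXYinv_le_iff hl hu hb hrc x y hxy hp.1 hp.2
    have hnull : Q1 (U ⁻¹' (Set.Iic 0 ∪ Set.Ioi 1)) = 0 := by
      have hm : MeasurableSet (Set.Iic (0:ℝ) ∪ Set.Ioi 1) :=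
        measurableSet_Iic.union measurableSet_Ioi
      have h := Measure.map_apply (μ := Q1) hU hm
      rw [hunif] at h
      rw [← h, Measure.restrict_apply hm]
      have heq : (Set.Iic (0:ℝ) ∪ Set.Ioi 1) ∩ Set.Icc 0 1 = {0} := by
        ext p
        simp only [Set.mem_inter_iff, Set.mem_union, Set.mem_Iic, Set.mem_Ioi, Set.mem_Icc,
          Set.mem_singleton_iff]
        constructor
        · rintro ⟨h1 | h1, h2, h3⟩
          · linarith
          · linarith
        · rintro rfl; exact ⟨Or.inl (le_refl 0), le_refl 0, zero_le_one⟩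
      rw [heq]
      exact measure_singleton 0
    have hIoc : Q1 (U ⁻¹' Set.Ioc 0 c) = ENNReal.ofReal c := by
      have hm : MeasurableSet (Set.Ioc (0:ℝ) c) := measurableSet_Ioc
      have h := Measure.map_apply (μ := Q1) hU hm
      rw [hunif] at h
      rw [← h, Measure.restrict_apply hm]
      have heq : Set.Ioc (0:ℝ) c ∩ Set.Icc 0 1 = Set.Ioc 0 c :=
        Set.inter_eq_self_of_subset_left (Set.Ioc_subset_Icc_self.trans (Set.Icc_subset_Icc_right hc1))
      rw [heq, Real.volume_Ioc, sub_zero]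
    have hsub1 : U ⁻¹' Set.Ioc 0 c ⊆ {ω | lamXYinv Λ x y (U ω) ≤ z} := by
      intro ω hω
      exact (key _ ⟨hω.1, hω.2.trans hc1⟩).2 hω.2
    have hsub2 : {ω | lamXYinv Λ x y (U ω) ≤ z} ⊆
        U ⁻¹' Set.Ioc 0 c ∪ U ⁻¹' (Set.Iic 0 ∪ Set.Ioi 1) := by
      intro ω hω
      rcases le_or_gt (U ω) 0 with h0 | h0
      · exact Or.inr (Or.inl h0)
      rcases le_or_gt (U ω) 1 with h1 | h1
      · exact Or.inl ⟨h0, (key _ ⟨h0, h1⟩).1 hω⟩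
      · exact Or.inr (Or.inr h1)
    have hmeas : Q1 {ω | lamXYinv Λ x y (U ω) ≤ z} = ENNReal.ofReal c := by
      refine le_antisymm ?_ ?_
      · calc Q1 {ω | lamXYinv Λ x y (U ω) ≤ z}
            ≤ Q1 (U ⁻¹' Set.Ioc 0 c ∪ U ⁻¹' (Set.Iic 0 ∪ Set.Ioi 1)) := measure_mono hsub2
          _ ≤ Q1 (U ⁻¹' Set.Ioc 0 c) + Q1 (U ⁻¹' (Set.Iic 0 ∪ Set.Ioi 1)) := measure_union_le _ _
          _ = ENNReal.ofReal c := by rw [hIoc, hnull, add_zero]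
      · rw [← hIoc]
        exact measure_mono hsub1
    rw [distFn]
    simp only [hmeas]
    exact ENNReal.toReal_ofReal hc0
  -- Step 2: the set {z | lamXY z < 1 - Λ z} equals Iio x
  have hSet : {z | distFn Q1 (fun ω => lamXYinv Λ x y (U ω)) z < 1 - Λ z} = Set.Iio x := by
    ext z
    simp only [Set.mem_setOf_eq, hdist z, Set.mem_Iio]
    constructor
    · intro h
      by_contra hc
      push_neg at hc
      rcases lt_or_ge z y with hzy | hyz
      · rw [lamXY, if_neg (not_lt.2 hc), if_pos hzy] at h
        have := lamLow_le hb (⟨hc, le_refl z⟩ : z ∈ Set.Icc x z)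
        linarith
      · rw [lamXY, if_neg (not_lt.2 hc), if_neg (not_lt.2 hyz)] at h
        have := (hb z).1; linarith
    · intro h
      rw [lamXY, if_pos h]
      have := (hb z).2; linarith
  rw [lambdaVaRplus, hSet, csSup_Iio]
end
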